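/- arXiv:math/0210402 — 2 statements merged into one kernel-verified Lean document; each statement's English description precedes it below -/
import Mathlib

section
/- Let p be a prime and n a natural number. The set of coefficient vectors c : Fin n → ℚ_p such that the monic polynomial X^n + c_{n-1}X^{n-1} + ... + c_1 X + c_0 splits into linear factors over ℚ_p is a closed subset of ℚ_p^n (with the product topology coming from the p-adic topology). Equivalently, if a sequence of monic degree-n polynomials over ℚ_p, each of which splits over ℚ_p, converges coefficientwise to a monic degree-n polynomial f, then f splits over ℚ_p. -/
/-! A monic polynomial of degree `n` over a field splits iff it equals `∏ j, (X - C (r j))` for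
some `r : Fin n → K`, so the set in question is the image of the map sending roots to
coefficients. That map is continuous, its coefficients being polynomials in the roots, and
proper, because Cauchy's bound controls the roots by the coefficients and closed balls of
`ℚ_[p]ⁿ` are compact. A proper map is closed, so its image is closed. -/

open Polynomial

theorem Multiset.exists_univ_map_eq_of_card_eq {α : Type*} {n : ℕ} (s : Multiset α)
    (hs : Multiset.card s = n) : ∃ r : Fin n → α, Finset.univ.val.map r = s := by
  obtain ⟨l, rfl⟩ : ∃ l : List α, (l : Multiset α) = s := Quot.exists_rep s
  rw [Multiset.coe_card] at hs
  subst hs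
  exact ⟨l.get, by rw [Fin.univ_val_map, List.ofFn_get]⟩

namespace Polynomial

section CommRing

variable {R : Type*} [CommRing R] {n : ℕ}

noncomputable def monicOfCoeffs (c : Fin n → R) : R[X] :=
  X ^ n + ∑ i : Fin n, C (c i) * X ^ (i : ℕ)

noncomputable def coeffsOfRoots (r : Fin n → R) (i : Fin n) : R :=
  (∏ j, (X - C (r j))).coeff i

theorem monicOfCoeffs_monic [Nontrivial R] (c : Fin n → R) : (monicOfCoeffs c).Monic :=
  monic_X_pow_add (degree_sum_fin_lt c)

theorem natDegree_monicOfCoeffs [Nontrivial R] (c : Fin n → R) :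
    (monicOfCoeffs c).natDegree = n :=
  natDegree_eq_of_degree_eq_some <| by
    rw [monicOfCoeffs, degree_add_eq_left_of_degree_lt] <;> rw [degree_X_pow]
    exact degree_sum_fin_lt c

theorem coeff_monicOfCoeffs (c : Fin n → R) (i : Fin n) : (monicOfCoeffs c).coeff i = c i := by
  simp [monicOfCoeffs, coeff_X_pow, i.2.ne, coeff_C_mul, Fin.val_inj]

theorem Monic.eq_monicOfCoeffs {f : R[X]} (hf : f.Monic) (hn : f.natDegree = n) :
    f = monicOfCoeffs (n := n) fun i => f.coeff i := by
  conv_lhs => rw [hf.as_sum, hn]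
  rw [monicOfCoeffs, Fin.sum_univ_eq_sum_range (fun i => C (f.coeff i) * X ^ i)]

theorem natDegree_prod_X_sub_C [Nontrivial R] (r : Fin n → R) :
    (∏ j, (X - C (r j))).natDegree = n := by
  simp [natDegree_prod_of_monic _ _ fun j _ => monic_X_sub_C (r j)]

theorem monicOfCoeffs_coeffsOfRoots [Nontrivial R] (r : Fin n → R) :
    monicOfCoeffs (coeffsOfRoots r) = ∏ j, (X - C (r j)) :=
  ((monic_prod_X_sub_C r _).eq_monicOfCoeffs (natDegree_prod_X_sub_C r)).symm

theorem isRoot_prod_X_sub_C (r : Fin n → R) (j : Fin n) : (∏ k, (X - C (r k))).IsRoot (r j) := by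
  simp [IsRoot, eval_prod, Finset.prod_eq_zero (Finset.mem_univ j)]

variable [TopologicalSpace R] [IsTopologicalRing R]

theorem continuous_coeffsOfRoots : Continuous (coeffsOfRoots : (Fin n → R) → Fin n → R) := by
  have hmap (r : Fin n → R) : ∏ j, (X - C (r j)) =
      (∏ j, (X - C (MvPolynomial.X j)) : (MvPolynomial (Fin n) R)[X]).map
        (MvPolynomial.eval r) := by
    simp [Polynomial.map_prod]
  refine continuous_pi fun i => ?_
  simp only [coeffsOfRoots, hmap, coeff_map]
  exact MvPolynomial.continuous_eval _

end CommRing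

theorem range_coeffsOfRoots {K : Type*} [Field K] {n : ℕ} :
    Set.range (coeffsOfRoots : (Fin n → K) → Fin n → K) = {c | (monicOfCoeffs c).Splits} := by
  ext c
  constructor
  · rintro ⟨r, rfl⟩
    show (monicOfCoeffs _).Splits
    rw [monicOfCoeffs_coeffsOfRoots]
    exact Splits.prod fun j _ => Splits.X_sub_C (r j)
  · intro hc
    have hcard : Multiset.card (monicOfCoeffs c).roots = n := by
      rw [splits_iff_card_roots.mp hc, natDegree_monicOfCoeffs]
    obtain ⟨r, hr⟩ := (monicOfCoeffs c).roots.exists_univ_map_eq_of_card_eq hcard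
    have hprod : ∏ j, (X - C (r j)) = monicOfCoeffs c := by
      rw [hc.eq_prod_roots_of_monic (monicOfCoeffs_monic c), ← hr, Multiset.map_map]
      rfl
    refine ⟨r, ?_⟩
    ext i
    rw [coeffsOfRoots, hprod, coeff_monicOfCoeffs]

theorem Monic.norm_le_of_isRoot {K : Type*} [NormedDivisionRing K] {f : K[X]} (hf : f.Monic)
    {R : ℝ} (hR : 0 ≤ R) (hcoeff : ∀ i < f.natDegree, ‖f.coeff i‖ ≤ R) {x : K}
    (hx : f.IsRoot x) : ‖x‖ ≤ R + 1 := by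
  lift R to NNReal using hR
  have hbound : cauchyBound f ≤ R + 1 := by
    rw [cauchyBound, hf.leadingCoeff, nnnorm_one, div_one]
    gcongr
    exact Finset.sup_le fun i hi => hcoeff i (Finset.mem_range.mp hi)
  exact_mod_cast ((hx.norm_lt_cauchyBound hf.ne_zero).trans_le hbound).le

theorem isProperMap_coeffsOfRoots {K : Type*} [NormedField K] [ProperSpace K] {n : ℕ} :
    IsProperMap (coeffsOfRoots : (Fin n → K) → Fin n → K) := by
  refine isProperMap_iff_isCompact_preimage.mpr ⟨continuous_coeffsOfRoots, fun L hL => ?_⟩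
  obtain ⟨R, hR, hL_bdd⟩ := hL.isBounded.exists_pos_norm_le
  refine (isCompact_closedBall (0 : Fin n → K) (R + 1)).of_isClosed_subset
    (hL.isClosed.preimage continuous_coeffsOfRoots) fun r hr => ?_
  rw [mem_closedBall_zero_iff, pi_norm_le_iff_of_nonneg (by positivity)]
  refine fun j => (monic_prod_X_sub_C r _).norm_le_of_isRoot hR.le (fun i hi => ?_)
    (isRoot_prod_X_sub_C r j)
  rw [natDegree_prod_X_sub_C] at hi
  exact (norm_le_pi_norm (coeffsOfRoots r) ⟨i, hi⟩).trans (hL_bdd _ hr)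

theorem isClosed_setOf_splits_monicOfCoeffs {K : Type*} [NormedField K] [ProperSpace K]
    (n : ℕ) : IsClosed {c : Fin n → K | (monicOfCoeffs c).Splits} := by
  rw [← range_coeffsOfRoots]
  exact isProperMap_coeffsOfRoots.isClosedMap.isClosed_range

end Polynomial

/-- The set of coefficient vectors `c : Fin n → ℚ_[p]` such that the monic polynomial
`X^n + c_{n-1} X^{n-1} + ⋯ + c_1 X + c_0` splits into linear factors over `ℚ_[p]`
is closed in `Fin n → ℚ_[p]` with the product topology. -/
theorem split_monic_polynomials_closed (p : ℕ) [Fact p.Prime] (n : ℕ) :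
    IsClosed {c : Fin n → ℚ_[p] |
      (Polynomial.X ^ n + ∑ i : Fin n, Polynomial.C (c i) * Polynomial.X ^ (i : ℕ)).Splits} :=
  isClosed_setOf_splits_monicOfCoeffs n
end

section
/- Let p be a prime, G a topological group, and ρ : G → GL_n(ℚ_p) a continuous group homomorphism. Suppose D is a dense subset of G such that for every g ∈ D the characteristic polynomial of the matrix ρ(g) splits into linear factors over ℚ_p. Then for every g ∈ G the characteristic polynomial of ρ(g) splits into linear factors over ℚ_p. -/
/-!
Splitting of a monic polynomial of degree `n` over `ℚ_p` means that its coefficient vector lies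
in the image of the map sending roots `(r₁, …, rₙ)` to the coefficients of `∏ (X + rᵢ)`. By
Cauchy's bound the roots are controlled by the coefficients, so this map is proper, and since
`ℚ_p` is locally compact its image is closed. The coefficients of the characteristic polynomial
of `ρ g` depend continuously on `g`, so the set of `g` where it splits is closed; it contains the
dense set `D`, hence is everything.
-/

namespace Polynomial

variable {R : Type*}

theorem isMonicOfDegree_prod_X_add_C [CommSemiring R] [Nontrivial R] {ι : Type*} (s : Finset ι)
    (r : ι → R) :
    (∏ i ∈ s, (X + C (r i))).IsMonicOfDegree s.card := by
  classical
  induction s using Finset.induction_on with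
  | empty => simp
  | insert a s ha ih =>
    rw [Finset.prod_insert ha, Finset.card_insert_of_notMem ha, Nat.add_comm]
    exact (isMonicOfDegree_X_add_one (r a)).mul ih

theorem IsMonicOfDegree.splits_iff_exists_eq_prod_X_add_C [CommSemiring R] [Nontrivial R]
    {f : R[X]} {n : ℕ} (hf : f.IsMonicOfDegree n) :
    f.Splits ↔ ∃ r : Fin n → R, f = ∏ i, (X + C (r i)) := by
  constructor
  · intro hs
    obtain ⟨m, hm⟩ := splits_iff_exists_multiset'.mp hs
    rw [hf.leadingCoeff_eq, C_1, one_mul] at hm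
    obtain ⟨l, rfl⟩ : ∃ l : List R, (l : Multiset R) = m := Quot.exists_rep m
    obtain rfl : l.length = n := by
      rw [← hf.natDegree_eq, hm, natDegree_multiset_prod_of_monic _ (by simp [monic_X_add_C])]
      simp [Function.comp_def]
    have hl : Finset.univ.val.map l.get = l := by rw [Fin.univ_val_map, List.ofFn_get]
    refine ⟨l.get, ?_⟩
    rw [hm, ← hl, Multiset.map_map]
    rfl
  · rintro ⟨r, rfl⟩
    exact Splits.prod fun i _ ↦ Splits.X_add_C (r i)

theorem continuous_coeff_prod_X_add_C [CommSemiring R] [Nontrivial R]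
    [TopologicalSpace R] [IsTopologicalSemiring R] (n k : ℕ) :
    Continuous fun r : Fin n → R ↦ (∏ i, (X + C (r i))).coeff k := by
  by_cases hk : k ≤ n
  · simp only [Finset.prod_X_add_C_coeff _ _ (show k ≤ (Finset.univ : Finset (Fin n)).card by
      simpa)]
    fun_prop
  · have hdeg (r : Fin n → R) := (isMonicOfDegree_prod_X_add_C Finset.univ r).natDegree_eq
    simp only [coeff_eq_zero_of_natDegree_lt ((hdeg _).trans_lt (by simpa using hk))]
    exact continuous_const

theorem norm_lt_norm_coeff_prod_X_add_C_add_one {K : Type*} [NormedField K] {n : ℕ}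
    (r : Fin n → K) (i : Fin n) :
    ‖r i‖ < ‖fun k : Fin n ↦ (∏ j, (X + C (r j))).coeff k‖ + 1 := by
  have hf : (∏ j, (X + C (r j))).IsMonicOfDegree n := by
    simpa using isMonicOfDegree_prod_X_add_C Finset.univ r
  have hroot : (∏ j, (X + C (r j))).IsRoot (-r i) := by
    simp only [IsRoot, eval_prod]
    exact Finset.prod_eq_zero (Finset.mem_univ i) (by simp)
  have hbound : cauchyBound (∏ j, (X + C (r j))) ≤
      ‖fun k : Fin n ↦ (∏ j, (X + C (r j))).coeff k‖₊ + 1 := by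
    rw [cauchyBound, hf.leadingCoeff_eq, nnnorm_one, div_one, hf.natDegree_eq]
    gcongr
    exact Finset.sup_le fun k hk ↦
      nnnorm_le_pi_nnnorm (fun k : Fin n ↦ (∏ j, (X + C (r j))).coeff k)
        ⟨k, Finset.mem_range.mp hk⟩
  rw [← norm_neg]
  exact_mod_cast (hroot.norm_lt_cauchyBound hf.ne_zero).trans_le hbound

theorem isProperMap_coeff_prod_X_add_C {K : Type*} [NormedField K] [ProperSpace K] (n : ℕ) :
    IsProperMap fun r : Fin n → K ↦ (∏ i, (X + C (r i))).coeff := by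
  have hcont : Continuous fun r : Fin n → K ↦ (∏ i, (X + C (r i))).coeff :=
    continuous_pi (continuous_coeff_prod_X_add_C n)
  refine isProperMap_iff_isCompact_preimage.mpr ⟨hcont, fun S hS ↦ ?_⟩
  obtain ⟨B, hB0, hB⟩ := (hS.image (continuous_pi fun k : Fin n ↦ continuous_apply (k : ℕ)))
    |>.isBounded.exists_pos_norm_le
  refine (isCompact_closedBall (0 : Fin n → K) (B + 1)).of_isClosed_subset
    (hS.isClosed.preimage hcont) fun r hr ↦ ?_
  rw [mem_closedBall_zero_iff, pi_norm_le_iff_of_nonneg (by positivity)]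
  exact fun i ↦ (norm_lt_norm_coeff_prod_X_add_C_add_one r i).le.trans
    (by gcongr; exact hB _ ⟨_, hr, rfl⟩)

theorem isClosed_setOf_splits {K Y : Type*} [NormedField K] [ProperSpace K] [TopologicalSpace Y]
    {f : Y → K[X]} {n : ℕ} (hf : ∀ x, (f x).IsMonicOfDegree n)
    (hcont : ∀ k, Continuous fun x ↦ (f x).coeff k) :
    IsClosed {x | (f x).Splits} := by
  have hrange : {x | (f x).Splits} =
      (fun x ↦ (f x).coeff) ⁻¹' Set.range fun r : Fin n → K ↦ (∏ i, (X + C (r i))).coeff := by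
    ext x
    simp only [Set.mem_ofPred_eq, (hf x).splits_iff_exists_eq_prod_X_add_C, Set.mem_preimage,
      Set.mem_range, coeff_injective.eq_iff, eq_comm]
  rw [hrange]
  exact (isProperMap_coeff_prod_X_add_C n).isClosedMap.isClosed_range.preimage
    (continuous_pi hcont)

end Polynomial

theorem Matrix.continuous_charpoly_coeff {n R : Type*} [Fintype n] [DecidableEq n] [CommRing R]
    [TopologicalSpace R] [IsTopologicalRing R] (k : ℕ) :
    Continuous fun A : Matrix n n R ↦ A.charpoly.coeff k := by
  have hentries : Continuous fun (A : Matrix n n R) (ij : n × n) ↦ A ij.1 ij.2 :=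
    continuous_pi fun ij ↦ continuous_id.matrix_elem ij.1 ij.2
  refine ((MvPolynomial.continuous_eval ((charpoly.univ R n).coeff k)).comp hentries).congr
    fun A ↦ charpoly.univ_coeff_eval₂Hom n (RingHom.id R) _ k

theorem charpoly_splits_of_dense_splits_general (p : ℕ) [Fact p.Prime] (n : ℕ)
    (G : Type*) [Group G] [TopologicalSpace G]
    (ρ : G →* GL (Fin n) ℚ_[p]) (hρ : Continuous ρ)
    (D : Set G) (hD : Dense D)
    (hsplit : ∀ g ∈ D,
      ((Matrix.charpoly (ρ g : Matrix (Fin n) (Fin n) ℚ_[p])).map (RingHom.id ℚ_[p])).Splits) :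
    ∀ g : G,
      ((Matrix.charpoly (ρ g : Matrix (Fin n) (Fin n) ℚ_[p])).map (RingHom.id ℚ_[p])).Splits := by
  simp only [Polynomial.map_id] at hsplit ⊢
  have hclosed : IsClosed {g : G | (ρ g : Matrix (Fin n) (Fin n) ℚ_[p]).charpoly.Splits} :=
    Polynomial.isClosed_setOf_splits (n := n)
      (fun g ↦ ⟨by simp [Matrix.charpoly_natDegree_eq_dim], Matrix.charpoly_monic _⟩)
      (fun k ↦ (Matrix.continuous_charpoly_coeff k).comp (Units.continuous_val.comp hρ))
  intro g
  exact hclosed.closure_subset_iff.mpr hsplit (hD.closure_eq ▸ Set.mem_univ g)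

/-- If `ρ : G → GL_n(ℚ_p)` is a continuous homomorphism from a topological group and the
characteristic polynomial of `ρ g` splits over `ℚ_p` for all `g` in a dense subset `D`, then
the characteristic polynomial of `ρ g` splits over `ℚ_p` for every `g : G`. -/
theorem charpoly_splits_of_dense_splits (p : ℕ) [Fact p.Prime] (n : ℕ)
    (G : Type*) [Group G] [TopologicalSpace G] [IsTopologicalGroup G]
    (ρ : G →* GL (Fin n) ℚ_[p]) (hρ : Continuous ρ)
    (D : Set G) (hD : Dense D)
    (hsplit : ∀ g ∈ D,
      ((Matrix.charpoly (ρ g : Matrix (Fin n) (Fin n) ℚ_[p])).map (RingHom.id ℚ_[p])).Splits) :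
    ∀ g : G,
      ((Matrix.charpoly (ρ g : Matrix (Fin n) (Fin n) ℚ_[p])).map (RingHom.id ℚ_[p])).Splits :=
  charpoly_splits_of_dense_splits_general p n G ρ hρ D hD hsplit
end
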